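/- (Encoder equivariance, Lemma 2 of the appendix.) Let the function space ℝ^{ℝᵈ} carry the product σ-algebra (MeasurableSpace.pi with the Borel σ-algebra on ℝ). For mean and standard-deviation functions μ : D ↦ (ℝᵈ → ℝ) and σ : D ↦ (ℝᵈ → ℝ≥0) defined on data sets D (lists of pairs in ℝᵈ × ℝ), define the noise-GP encoder E(D) := the infinite product measure ⨂_{x ∈ ℝᵈ} N(μ(D)(x), σ(D)(x)²) on ℝ^{ℝᵈ}, built from real Gaussian measures via the infinite product of probability measures. If μ and σ are translation equivariant as maps into function space, i.e. μ(T_τ D)(x) = μ(D)(x − τ) and σ(T_τ D)(x) = σ(D)(x − τ) for all D, x, τ, then E is translation equivariant as a map to measures: E(T_τ D) = Measure.map T_τ (E(D)) for all D and τ. -/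

import Mathlib

/-!
Precomposing with a bijection `e` of the index set carries a projective limit of product
measures `⨂ᵢ Pᵢ` to the projective limit of `⨂ᵢ P (e i)`: on a finite set `J` of indices the
marginal is the marginal on `e '' J`, reindexed along `e`, and reindexing preserves product
measures. For `e x = x - τ`, equivariance of `μ` and `σ` identifies `⨂ₓ N(μ D (x - τ), σ D (x - τ)²)`
with the family defining `E (T_τ D)`, and projective limits of probability measures are unique.
-/

open MeasureTheory ProbabilityTheory
open scoped NNReal

namespace MeasureTheory.IsProjectiveLimit

variable {ι ι' : Type*} {α : ι' → Type*} [∀ i, MeasurableSpace (α i)]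

theorem map_precomp_equiv (e : ι ≃ ι') {P : ∀ i, Measure (α i)} [∀ i, SigmaFinite (P i)]
    {ν : Measure (∀ i, α i)} (hν : IsProjectiveLimit ν fun J => Measure.pi fun j : J => P j) :
    IsProjectiveLimit (ν.map fun f i => f (e i))
      fun J : Finset ι => Measure.pi fun j : J => P (e j) := by
  intro J
  let g : J ≃ J.map e.toEmbedding := e.subtypeEquiv fun i => by simp
  let r : (∀ j : J, α (e j)) ≃ᵐ ∀ j : J.map e.toEmbedding, α j :=
    MeasurableEquiv.piCongrLeft (fun j : J.map e.toEmbedding => α j) g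
  calc (ν.map fun f i => f (e i)).map J.restrict
      = ν.map (J.restrict ∘ fun f i => f (e i)) :=
        Measure.map_map (Finset.measurable_restrict _) (by fun_prop)
    -- `J.restrict ∘ (· ∘ e) = r.symm ∘ (J.map e).restrict` holds definitionally
    _ = (ν.map (Finset.restrict _)).map r.symm :=
        (Measure.map_map r.symm.measurable (Finset.measurable_restrict _)).symm
    _ = Measure.pi fun j : J => P (e j) := by
        rw [hν]
        exact (measurePreserving_piCongrLeft (fun j : J.map e.toEmbedding => P j) g).symm.map_eq

end MeasureTheory.IsProjectiveLimit

/-- encoder equivariance: let `E` map data sets (lists of pairs in `ℝᵈ × ℝ`)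
to the noise-GP measure on `ℝ^{ℝᵈ}`, i.e. for each data set `D`, `E D` is the infinite
product `⨂_{x} N(μ D x, (σ D x)²)` (characterized as the projective limit of its
finite-dimensional product-Gaussian marginals). If the mean and standard-deviation maps
`μ, σ` are translation equivariant, then `E` is translation equivariant as a map to
measures: `E (T_τ D) = Measure.map T_τ (E D)`. -/
theorem encoder_translation_equivariant {d : ℕ}
    (μ : List ((Fin d → ℝ) × ℝ) → (Fin d → ℝ) → ℝ)
    (σ : List ((Fin d → ℝ) × ℝ) → (Fin d → ℝ) → ℝ≥0)
    (E : List ((Fin d → ℝ) × ℝ) → Measure ((Fin d → ℝ) → ℝ))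
    (hE : ∀ D : List ((Fin d → ℝ) × ℝ),
      IsProjectiveLimit (E D) (fun J : Finset (Fin d → ℝ) =>
        Measure.pi fun x : J => gaussianReal (μ D x) (σ D x ^ 2)))
    (hμ : ∀ (D : List ((Fin d → ℝ) × ℝ)) (τ x : Fin d → ℝ),
      μ (D.map fun p => (p.1 + τ, p.2)) x = μ D (x - τ))
    (hσ : ∀ (D : List ((Fin d → ℝ) × ℝ)) (τ x : Fin d → ℝ),
      σ (D.map fun p => (p.1 + τ, p.2)) x = σ D (x - τ)) :
    ∀ (D : List ((Fin d → ℝ) × ℝ)) (τ : Fin d → ℝ),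
      E (D.map fun p => (p.1 + τ, p.2))
        = Measure.map (fun f : (Fin d → ℝ) → ℝ => fun x => f (x - τ)) (E D) := by
  intro D τ
  refine (hE _).unique ?_
  simp only [hμ, hσ]
  exact (hE D).map_precomp_equiv (P := fun x => gaussianReal (μ D x) (σ D x ^ 2))
    (Equiv.subRight τ)
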